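/- arXiv:1806.00188 — 2 statements merged into one kernel-verified Lean document; each statement's English description precedes it below -/
import Mathlib

section
/- If W ⊆ V is feasible for the vertex-selection problem (Σ_{v∈W} w(v) ≤ b) and satisfies f_e(edges(W)) ≥ α · OPT_v, where OPT_v is the optimal value of the vertex-selection problem, then edges(W) is feasible for the edge-selection problem and f_e(edges(W)) ≥ α · OPT_e, where OPT_e is the optimal value of the edge-selection problem. (Approximation factor preserving reduction.) -/
open scoped Classical
open Finset

/-- The set of edges of `G` having at least one endpoint in `W`. -/
noncomputable def edgesOf {V : Type*} [Fintype V] [DecidableEq V]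
    (G : SimpleGraph V) (W : Finset V) : Finset (Sym2 V) :=
  Finset.univ.filter (fun e => e ∈ G.edgeSet ∧ ∃ v ∈ W, v ∈ e)

/-- `C` is a vertex cover of the edge set `E'`. -/
def IsCover {V : Type*} (C : Finset V) (E' : Finset (Sym2 V)) : Prop :=
  ∀ e ∈ E', ∃ v ∈ C, v ∈ e

/-- Minimum weight of a vertex cover of the edge set `E'`. -/
noncomputable def coverWeight {V : Type*} [Fintype V] [DecidableEq V]
    (w : V → ℝ) (E' : Finset (Sym2 V)) : ℝ :=
  sInf {x : ℝ | ∃ C : Finset V, IsCover C E' ∧ x = ∑ v ∈ C, w v}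

/-!
Every vertex set `W` covers `edgesOf G W`, so `coverWeight (edgesOf G W) ≤ w(W) ≤ b`.
Conversely, a feasible edge set `E'` has a minimum-weight cover `C` with `w(C) ≤ b`, and
`E' ⊆ edgesOf G C`; by monotonicity `f_e(E') ≤ f_e(edgesOf G C) ≤ OPT_v`. Hence
`OPT_e ≤ OPT_v`, and an `α`-approximation for the vertex problem is one for the edge problem.
-/

section

variable {V : Type*}

theorem isCover_univ [Fintype V] (E' : Finset (Sym2 V)) : IsCover Finset.univ E' := by
  intro e _
  induction e using Sym2.ind with
  | _ a _ => exact ⟨a, Finset.mem_univ a, Sym2.mem_mk_left _ _⟩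

theorem finite_coverSums [Fintype V] (w : V → ℝ) (E' : Finset (Sym2 V)) :
    {x : ℝ | ∃ C : Finset V, IsCover C E' ∧ x = ∑ v ∈ C, w v}.Finite :=
  (Set.finite_range fun C : Finset V => ∑ v ∈ C, w v).subset fun _ ⟨C, _, hx⟩ => ⟨C, hx.symm⟩

variable [Fintype V] [DecidableEq V]

theorem isCover_edgesOf (G : SimpleGraph V) (W : Finset V) : IsCover W (edgesOf G W) :=
  fun _ he => (Finset.mem_filter.mp he).2.2

theorem mem_edgeSet_of_mem_edgesOf {G : SimpleGraph V} {W : Finset V} {e : Sym2 V}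
    (he : e ∈ edgesOf G W) : e ∈ G.edgeSet :=
  (Finset.mem_filter.mp he).2.1

theorem subset_edgesOf_of_isCover {G : SimpleGraph V} {C : Finset V} {E' : Finset (Sym2 V)}
    (hE' : ∀ e ∈ E', e ∈ G.edgeSet) (hC : IsCover C E') : E' ⊆ edgesOf G C :=
  fun e he => Finset.mem_filter.mpr ⟨Finset.mem_univ e, hE' e he, hC e he⟩

theorem coverWeight_le_sum (w : V → ℝ) {C : Finset V} {E' : Finset (Sym2 V)}
    (hC : IsCover C E') : coverWeight w E' ≤ ∑ v ∈ C, w v :=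
  csInf_le (finite_coverSums w E').bddBelow ⟨C, hC, rfl⟩

theorem exists_isCover_sum_eq_coverWeight (w : V → ℝ) (E' : Finset (Sym2 V)) :
    ∃ C : Finset V, IsCover C E' ∧ ∑ v ∈ C, w v = coverWeight w E' := by
  have hmem : coverWeight w E' ∈ {x : ℝ | ∃ C : Finset V, IsCover C E' ∧ x = ∑ v ∈ C, w v} :=
    Set.Nonempty.csInf_mem ⟨_, Finset.univ, isCover_univ E', rfl⟩ (finite_coverSums w E')
  obtain ⟨C, hC, hsum⟩ := hmem
  exact ⟨C, hC, hsum.symm⟩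

/-- `OPT_v`. -/
noncomputable def optVertex (G : SimpleGraph V) (w : V → ℝ) (b : ℝ)
    (fe : Finset (Sym2 V) → ℝ) : ℝ :=
  sSup {y : ℝ | ∃ W' : Finset V, (∑ v ∈ W', w v) ≤ b ∧ y = fe (edgesOf G W')}

/-- `OPT_e`. -/
noncomputable def optEdge (G : SimpleGraph V) (w : V → ℝ) (b : ℝ)
    (fe : Finset (Sym2 V) → ℝ) : ℝ :=
  sSup {y : ℝ | ∃ E' : Finset (Sym2 V),
    (∀ e ∈ E', e ∈ G.edgeSet) ∧ coverWeight w E' ≤ b ∧ y = fe E'}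

theorem le_optVertex (G : SimpleGraph V) (w : V → ℝ) {b : ℝ} (fe : Finset (Sym2 V) → ℝ)
    {W : Finset V} (hW : ∑ v ∈ W, w v ≤ b) : fe (edgesOf G W) ≤ optVertex G w b fe := by
  refine le_csSup (Set.Finite.bddAbove ?_) ⟨W, hW, rfl⟩
  exact (Set.finite_range fun W' : Finset V => fe (edgesOf G W')).subset
    fun _ ⟨W', _, hy⟩ => ⟨W', hy.symm⟩

theorem coverWeight_edgesOf_le (G : SimpleGraph V) (w : V → ℝ) (W : Finset V) :
    coverWeight w (edgesOf G W) ≤ ∑ v ∈ W, w v :=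
  coverWeight_le_sum w (isCover_edgesOf G W)

theorem le_optVertex_of_coverWeight_le {G : SimpleGraph V} {w : V → ℝ} {b : ℝ}
    {fe : Finset (Sym2 V) → ℝ} (hmono : ∀ A B, A ⊆ B → fe A ≤ fe B) {E' : Finset (Sym2 V)}
    (hE' : ∀ e ∈ E', e ∈ G.edgeSet) (hb : coverWeight w E' ≤ b) :
    fe E' ≤ optVertex G w b fe := by
  obtain ⟨C, hC, hCw⟩ := exists_isCover_sum_eq_coverWeight w E'
  calc fe E' ≤ fe (edgesOf G C) := hmono _ _ (subset_edgesOf_of_isCover hE' hC)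
    _ ≤ optVertex G w b fe := le_optVertex G w fe (hCw ▸ hb)

theorem optEdge_le_optVertex {G : SimpleGraph V} {w : V → ℝ} {b : ℝ}
    {fe : Finset (Sym2 V) → ℝ} (hmono : ∀ A B, A ⊆ B → fe A ≤ fe B) {W : Finset V}
    (hW : ∑ v ∈ W, w v ≤ b) : optEdge G w b fe ≤ optVertex G w b fe := by
  have hne : {y : ℝ | ∃ E' : Finset (Sym2 V),
      (∀ e ∈ E', e ∈ G.edgeSet) ∧ coverWeight w E' ≤ b ∧ y = fe E'}.Nonempty :=
    ⟨_, edgesOf G W, fun _ => mem_edgeSet_of_mem_edgesOf,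
      (coverWeight_edgesOf_le G w W).trans hW, rfl⟩
  refine csSup_le hne ?_
  rintro _ ⟨E', hE', hb, rfl⟩
  exact le_optVertex_of_coverWeight_le hmono hE' hb

end

theorem approx_factor_preserving_general
    {V : Type*} [Fintype V] [DecidableEq V] (G : SimpleGraph V)
    (w : V → ℝ) (b : ℝ)
    (α : ℝ) (hα0 : 0 < α)
    (fe : Finset (Sym2 V) → ℝ)
    (hmono : ∀ A B, A ⊆ B → fe A ≤ fe B)
    (W : Finset V) (hfeas : (∑ v ∈ W, w v) ≤ b)
    (happrox : α * sSup {y : ℝ | ∃ W' : Finset V,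
        (∑ v ∈ W', w v) ≤ b ∧ y = fe (edgesOf G W')} ≤ fe (edgesOf G W)) :
    coverWeight w (edgesOf G W) ≤ b ∧
    α * sSup {y : ℝ | ∃ E' : Finset (Sym2 V),
        (∀ e ∈ E', e ∈ G.edgeSet) ∧ coverWeight w E' ≤ b ∧ y = fe E'} ≤
      fe (edgesOf G W) :=
  ⟨(coverWeight_edgesOf_le G w W).trans hfeas,
    (mul_le_mul_of_nonneg_left (optEdge_le_optVertex hmono hfeas) hα0.le).trans happrox⟩

/-- An `α`-approximate feasible solution of the vertex-selection problem maps (via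
`edges`) to an `α`-approximate feasible solution of the edge-selection problem. -/
theorem approx_factor_preserving
    {V : Type*} [Fintype V] [DecidableEq V] (G : SimpleGraph V)
    (w : V → ℝ) (hw : ∀ v, 0 < w v) (b : ℝ) (hb : 0 < b)
    (α : ℝ) (hα0 : 0 < α) (hα1 : α ≤ 1)
    (fe : Finset (Sym2 V) → ℝ)
    (hnonneg : ∀ A, 0 ≤ fe A)
    (hnorm : fe ∅ = 0)
    (hmono : ∀ A B, A ⊆ B → fe A ≤ fe B)
    (hsub : ∀ A B, fe (A ∪ B) + fe (A ∩ B) ≤ fe A + fe B)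
    (W : Finset V) (hfeas : (∑ v ∈ W, w v) ≤ b)
    (happrox : α * sSup {y : ℝ | ∃ W' : Finset V,
        (∑ v ∈ W', w v) ≤ b ∧ y = fe (edgesOf G W')} ≤ fe (edgesOf G W)) :
    coverWeight w (edgesOf G W) ≤ b ∧
    α * sSup {y : ℝ | ∃ E' : Finset (Sym2 V),
        (∀ e ∈ E', e ∈ G.edgeSet) ∧ coverWeight w E' ≤ b ∧ y = fe E'} ≤
      fe (edgesOf G W) :=
  approx_factor_preserving_general G w b α hα0 fe hmono W hfeas happrox
end

section
/- For a normalized monotone submodular function f and cardinality budget b, if the greedy algorithm is run for b + k rounds (k ≥ 0), the resulting set S satisfies f(S) ≥ (1 − e^{−(1+k/b)}) · max{f(T) : |T| ≤ b}. -/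
/-!
Let `OPT = f T` with `|T| ≤ b`. By submodularity, adding all of `T` to the current greedy set `A`
gains at most the sum of the single-element gains, hence at most `b` times the greedy gain; by
monotonicity that sum is at least `OPT - f A`. So each greedy step shrinks the gap `OPT - f A` by
a factor `1 - 1/b ≤ exp (-1/b)`, and after `b + k` steps the gap is at most
`exp (-(1 + k/b)) * OPT`.
-/

open Finset

section Greedy

variable {V : Type*} [DecidableEq V] {f : Finset V → ℝ}

lemma le_add_sum_marginal (hsub : ∀ A B, f (A ∪ B) + f (A ∩ B) ≤ f A + f B) (A T : Finset V) :
    f (A ∪ T) ≤ f A + ∑ u ∈ T, (f (insert u A) - f A) := by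
  induction T using Finset.induction_on with
  | empty => simp
  | @insert x T hx ih =>
    have hinter : (A ∪ T) ∩ insert x A = A := by
      ext y
      simp only [mem_inter, mem_union, mem_insert]
      grind
    have hunion : (A ∪ T) ∪ insert x A = A ∪ insert x T := by
      rw [union_insert, union_insert, union_right_comm, union_self]
    have hstep := hsub (A ∪ T) (insert x A)
    rw [hinter, hunion] at hstep
    rw [sum_insert hx]
    linarith

lemma sub_le_card_mul_greedy_gain (hmono : ∀ A B, A ⊆ B → f A ≤ f B)
    (hsub : ∀ A B, f (A ∪ B) + f (A ∩ B) ≤ f A + f B) {A : Finset V} {v : V}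
    (hv : ∀ u, f (insert u A) ≤ f (insert v A)) (T : Finset V) :
    f T - f A ≤ T.card * (f (insert v A) - f A) :=
  calc f T - f A
      ≤ f (A ∪ T) - f A := by linarith [hmono _ _ (subset_union_right : T ⊆ A ∪ T)]
    _ ≤ ∑ u ∈ T, (f (insert u A) - f A) := by linarith [le_add_sum_marginal hsub A T]
    _ ≤ ∑ _u ∈ T, (f (insert v A) - f A) := sum_le_sum fun u _ => by linarith [hv u]
    _ = T.card * (f (insert v A) - f A) := by rw [sum_const, nsmul_eq_mul]

lemma greedy_gap_contraction (hmono : ∀ A B, A ⊆ B → f A ≤ f B)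
    (hsub : ∀ A B, f (A ∪ B) + f (A ∩ B) ≤ f A + f B) {A T : Finset V} {v : V} {b : ℕ}
    (hb : 0 < b) (hT : T.card ≤ b) (hv : ∀ u, f (insert u A) ≤ f (insert v A)) :
    f T - f (insert v A) ≤ (1 - (b : ℝ)⁻¹) * (f T - f A) := by
  have hbpos : (0 : ℝ) < b := by exact_mod_cast hb
  have hgain : 0 ≤ f (insert v A) - f A := sub_nonneg.2 (hmono _ _ (subset_insert v A))
  have hgap : f T - f A ≤ b * (f (insert v A) - f A) :=
    (sub_le_card_mul_greedy_gain hmono hsub hv T).trans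
      (mul_le_mul_of_nonneg_right (by exact_mod_cast hT) hgain)
  have hdiv : (f T - f A) / b ≤ f (insert v A) - f A := by rwa [div_le_iff₀' hbpos]
  linarith [show (1 - (b : ℝ)⁻¹) * (f T - f A) = f T - f A - (f T - f A) / b by ring]

end Greedy

lemma one_sub_inv_pow_add_le_exp {b : ℕ} (hb : 0 < b) (k : ℕ) :
    (1 - (b : ℝ)⁻¹) ^ (b + k) ≤ Real.exp (-(1 + (k : ℝ) / b)) := by
  have hbpos : (0 : ℝ) < b := by exact_mod_cast hb
  calc (1 - (b : ℝ)⁻¹) ^ (b + k)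
      ≤ Real.exp (-(b : ℝ)⁻¹) ^ (b + k) :=
        pow_le_pow_left₀ (sub_nonneg.2 (Nat.cast_inv_le_one b)) (Real.one_sub_le_exp_neg _) _
    _ = Real.exp (-(1 + (k : ℝ) / b)) := by
      rw [← Real.exp_nat_mul]
      congr 1
      push_cast
      field_simp

theorem greedy_extended_guarantee_general
    {V : Type*} [DecidableEq V]
    (f : Finset V → ℝ)
    (hnorm : f ∅ = 0)
    (hmono : ∀ A B, A ⊆ B → f A ≤ f B)
    (hsub : ∀ A B, f (A ∪ B) + f (A ∩ B) ≤ f A + f B)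
    (b k : ℕ) (hb : 1 ≤ b)
    (S : ℕ → Finset V) (hS0 : S 0 = ∅)
    (hstep : ∀ n, n < b + k → ∃ v, v ∉ S n ∧ S (n + 1) = insert v (S n) ∧
      ∀ u, f (insert u (S n)) ≤ f (insert v (S n))) :
    ∀ T : Finset V, T.card ≤ b →
      (1 - Real.exp (-(1 + (k : ℝ) / (b : ℝ)))) * f T ≤ f (S (b + k)) := by
  intro T hT
  have hq : 0 ≤ 1 - (b : ℝ)⁻¹ := sub_nonneg.2 (Nat.cast_inv_le_one b)
  have hgap : f T - f (S (b + k)) ≤ (1 - (b : ℝ)⁻¹) ^ (b + k) * (f T - f (S 0)) :=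
    le_geom (u := fun n => f T - f (S n)) hq (b + k) fun n hn => by
      obtain ⟨v, -, hSn, hv⟩ := hstep n hn
      rw [hSn]
      exact greedy_gap_contraction hmono hsub hb hT hv
  have hT0 : 0 ≤ f T := hnorm ▸ hmono ∅ T (empty_subset T)
  rw [hS0, hnorm, sub_zero] at hgap
  linarith [mul_le_mul_of_nonneg_right (one_sub_inv_pow_add_le_exp hb k) hT0]

/-- Extended greedy guarantee: running the greedy algorithm for `b + k` rounds
achieves at least a `(1 - e^{-(1 + k/b)})` fraction of the optimum under the
cardinality budget `b`. -/
theorem greedy_extended_guarantee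
    {V : Type*} [Fintype V] [DecidableEq V]
    (f : Finset V → ℝ)
    (hnonneg : ∀ A, 0 ≤ f A)
    (hnorm : f ∅ = 0)
    (hmono : ∀ A B, A ⊆ B → f A ≤ f B)
    (hsub : ∀ A B, f (A ∪ B) + f (A ∩ B) ≤ f A + f B)
    (b k : ℕ) (hb : 1 ≤ b)
    (S : ℕ → Finset V) (hS0 : S 0 = ∅)
    (hstep : ∀ n, n < b + k → ∃ v, v ∉ S n ∧ S (n + 1) = insert v (S n) ∧
      ∀ u, f (insert u (S n)) ≤ f (insert v (S n))) :
    ∀ T : Finset V, T.card ≤ b →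
      (1 - Real.exp (-(1 + (k : ℝ) / (b : ℝ)))) * f T ≤ f (S (b + k)) :=
  greedy_extended_guarantee_general f hnorm hmono hsub b k hb S hS0 hstep
end
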